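/- arXiv:2407.12406 — 2 statements merged into one kernel-verified Lean document; each statement's English description precedes it below -/
import Mathlib

section
/- Let X, Y be Banach spaces and {T(t)}_{t≥0} a family of bounded linear operators from X to Y such that there exists m > 0 with ‖T(t)‖ ≥ m for all t ≥ 0, and for every T₀ ≥ 0 there exists M(T₀) with ‖T(t)‖ ≤ M(T₀) for all t ≤ T₀. Then for any continuous function g : [0,∞) → (0,1] with g(t) → 0 as t → ∞, there exists u₀ ∈ X such that limsup_{t→∞} ‖T(t)u₀‖_Y / g(t) = ∞. -/
open MeasureTheory Real Filter Set

theorem stmt4 {X Y : Type*} [NormedAddCommGroup X] [NormedSpace ℝ X] [CompleteSpace X]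
    [NormedAddCommGroup Y] [NormedSpace ℝ Y] [CompleteSpace Y]
    (T : ℝ → X →L[ℝ] Y) (m : ℝ) (hm : 0 < m)
    (hlow : ∀ t : ℝ, 0 ≤ t → m ≤ ‖T t‖)
    (hup : ∀ T₀ : ℝ, 0 ≤ T₀ → ∃ M : ℝ, ∀ t : ℝ, 0 ≤ t → t ≤ T₀ → ‖T t‖ ≤ M)
    (g : ℝ → ℝ) (hgc : ContinuousOn g (Ici 0))
    (hg : ∀ t : ℝ, 0 ≤ t → g t ∈ Set.Ioc (0 : ℝ) 1)
    (hg0 : Tendsto g atTop (nhds 0)) :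
    ∃ u₀ : X, Filter.limsup (fun t => ((‖T t u₀‖ / g t : ℝ) : EReal)) atTop = ⊤ := by
  -- the operators S n = (g n)⁻¹ • T n for natural n
  set S : ℕ → X →L[ℝ] Y := fun n => (g n)⁻¹ • T n with hS
  have hgn : ∀ n : ℕ, 0 < g n := fun n => (hg n (Nat.cast_nonneg n)).1
  -- ‖S n‖ ≥ m / g n → ∞
  have hgn0 : Tendsto (fun n : ℕ => g n) atTop (nhds 0) :=
    hg0.comp tendsto_natCast_atTop_atTop
  have hinv : Tendsto (fun n : ℕ => m / g n) atTop atTop := by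
    have h1 : Tendsto (fun n : ℕ => (g n)⁻¹) atTop atTop := by
      apply Filter.Tendsto.inv_tendsto_nhdsGT_zero
      apply tendsto_nhdsWithin_of_tendsto_nhds_of_eventually_within _ hgn0
      exact Eventually.of_forall fun n => hgn n
    simpa [div_eq_mul_inv] using h1.const_mul_atTop hm
  have hSnorm : ∀ n : ℕ, m / g n ≤ ‖S n‖ := by
    intro n
    have : ‖S n‖ = (g n)⁻¹ * ‖T n‖ := by
      simp only [hS]
      have h := norm_smul ((g n)⁻¹) (T n)
      rw [h, Real.norm_eq_abs, abs_of_pos (inv_pos.mpr (hgn n))]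
    rw [this, div_eq_mul_inv, mul_comm]
    exact mul_le_mul_of_nonneg_left (hlow n (Nat.cast_nonneg n)) (inv_pos.mpr (hgn n)).le
  -- Banach–Steinhaus: there is x with sup ‖S n x‖ = ∞
  have : ¬ ∀ x : X, ∃ C, ∀ n, ‖S n x‖ ≤ C := by
    intro h
    obtain ⟨C', hC'⟩ := banach_steinhaus h
    obtain ⟨n, hn⟩ := (hinv.eventually_gt_atTop C').exists
    exact absurd (le_trans (hSnorm n) (hC' n)) (not_le.mpr hn)
  push_neg at this
  obtain ⟨x, hx⟩ := this
  refine ⟨x, ?_⟩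
  -- for each c and N, there is n ≥ N with c < ‖S n x‖
  have key : ∀ c : ℝ, ∀ N : ℕ, ∃ n, N ≤ n ∧ c < ‖S n x‖ := by
    intro c N
    obtain ⟨n, hn⟩ := hx (max c (∑ i ∈ Finset.range N, ‖S i x‖))
    refine ⟨n, ?_, lt_of_le_of_lt (le_max_left _ _) hn⟩
    by_contra hlt
    push_neg at hlt
    have : ‖S n x‖ ≤ ∑ i ∈ Finset.range N, ‖S i x‖ :=
      Finset.single_le_sum (f := fun i => ‖S i x‖) (fun i _ => norm_nonneg _) (Finset.mem_range.mpr hlt)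
    exact absurd (lt_of_le_of_lt (le_max_right c _) hn) (not_lt.mpr this)
  -- value of ‖S n x‖
  have hval : ∀ n : ℕ, ‖S n x‖ = ‖T n x‖ / g n := by
    intro n
    simp only [hS, ContinuousLinearMap.smul_apply]
    have h := norm_smul ((g n)⁻¹) (T n x)
    rw [h, Real.norm_eq_abs, abs_of_pos (inv_pos.mpr (hgn n)), div_eq_mul_inv, mul_comm]
  -- frequently in ℝ
  have hfreq : ∀ c : ℝ, ∃ᶠ t in atTop, c < ‖T t x‖ / g t := by
    intro c
    have hnat : ∃ᶠ n : ℕ in atTop, c < ‖T (n : ℝ) x‖ / g n := by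
      rw [Filter.frequently_atTop]
      intro N
      obtain ⟨n, hNn, hc⟩ := key c N
      exact ⟨n, hNn, by rwa [hval] at hc⟩
    exact tendsto_natCast_atTop_atTop.frequently hnat
  -- conclude limsup = ⊤
  have hle : ∀ c : ℝ, (c : EReal) ≤ Filter.limsup (fun t => ((‖T t x‖ / g t : ℝ) : EReal)) atTop := by
    intro c
    exact le_limsup_of_frequently_le
      ((hfreq c).mono fun t ht => EReal.coe_le_coe_iff.mpr ht.le) (by isBoundedDefault)
  rw [← top_le_iff]
  by_contra htop
  push_neg at htop
  obtain ⟨c, hc1, hc2⟩ := EReal.exists_between_coe_real htop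
  exact absurd (hle c) (not_le.mpr hc1)
end

section
/- With the notation and assumptions of the kernel comparison lemma, for each fixed y ∈ Ω one has limsup_{t→∞} ∫_Ω |k^θ(x,y,t) - k_{ℝ^N}(x,y,t)| dx ≤ 2(1 - Φ⁰(y)). Moreover, if Φ⁰(y) → 1 as |y| → ∞, then limsup_{|y|→∞} limsup_{t→∞} ∫_Ω |k^θ(x,y,t) - k_{ℝ^N}(x,y,t)| dx = 0. -/
/-!
Since `k⁰` lies below both `k^θ` and the Gaussian kernel, `|k^θ - k_{ℝ^N}|` is at most
`(k^θ - k⁰) + (k_{ℝ^N} - k⁰)`. Both kernels have mass at most `1` on `Ω` while `k⁰` has mass at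
least `Φ⁰(y)`, so `∫_Ω |k^θ - k_{ℝ^N}| ≤ 2(1 - Φ⁰(y))` already holds for every `t > 0`, not only
in the limit. The second claim follows by squeezing, since `y` eventually leaves the compact `K`.
-/

open MeasureTheory Real Filter Set

/-- The Gaussian heat kernel on `ℝ^N`: `k_{ℝ^N}(x,y,t) = (4πt)^{-N/2} e^{-|x-y|²/(4t)}`. -/
noncomputable def kRN (N : ℕ) (x y : EuclideanSpace ℝ (Fin N)) (t : ℝ) : ℝ :=
  (4 * π * t) ^ (-(N : ℝ) / 2) * Real.exp (-‖x - y‖ ^ 2 / (4 * t))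

open Topology

section GaussianKernel

variable {N : ℕ}

lemma kRN_eq_mul_exp_neg_mul_sq_norm (x y : EuclideanSpace ℝ (Fin N)) (t : ℝ) :
    kRN N x y t = (4 * π * t) ^ (-(N : ℝ) / 2) * exp (-(1 / (4 * t)) * ‖x - y‖ ^ 2) := by
  unfold kRN
  ring_nf

lemma kRN_nonneg (x y : EuclideanSpace ℝ (Fin N)) {t : ℝ} (ht : 0 < t) : 0 ≤ kRN N x y t := by
  unfold kRN
  positivity

lemma integrable_kRN (y : EuclideanSpace ℝ (Fin N)) {t : ℝ} (ht : 0 < t) :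
    Integrable (fun x => kRN N x y t) := by
  have hb : (0 : ℝ) < 1 / (4 * t) := by positivity
  have hgauss : Integrable fun v : EuclideanSpace ℝ (Fin N) => exp (-(1 / (4 * t)) * ‖v‖ ^ 2) := by
    refine .of_integral_ne_zero ?_
    rw [GaussianFourier.integral_rexp_neg_mul_sq_norm hb]
    positivity
  simpa only [kRN_eq_mul_exp_neg_mul_sq_norm] using
    (hgauss.comp_sub_right y).const_mul ((4 * π * t) ^ (-(N : ℝ) / 2))

lemma integral_kRN (y : EuclideanSpace ℝ (Fin N)) {t : ℝ} (ht : 0 < t) :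
    ∫ x, kRN N x y t = 1 := by
  have hb : (0 : ℝ) < 1 / (4 * t) := by positivity
  have hc : (0 : ℝ) < 4 * π * t := by positivity
  simp_rw [kRN_eq_mul_exp_neg_mul_sq_norm]
  rw [integral_const_mul,
    integral_sub_right_eq_self (fun x => exp (-(1 / (4 * t)) * ‖x‖ ^ 2)) y,
    GaussianFourier.integral_rexp_neg_mul_sq_norm hb, finrank_euclideanSpace, Fintype.card_fin,
    show π / (1 / (4 * t)) = 4 * π * t by field_simp, neg_div, ← rpow_add hc]
  simp

lemma setIntegral_kRN_le_one (s : Set (EuclideanSpace ℝ (Fin N)))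
    (y : EuclideanSpace ℝ (Fin N)) {t : ℝ} (ht : 0 < t) :
    ∫ x in s, kRN N x y t ≤ 1 :=
  integral_kRN (N := N) y ht ▸
    setIntegral_le_integral (integrable_kRN y ht) (.of_forall fun x => kRN_nonneg x y ht)

end GaussianKernel

lemma integral_abs_sub_le_of_le_of_le {α : Type*} [MeasurableSpace α] {μ : Measure α}
    {f g h : α → ℝ} (hf : Integrable f μ) (hg : Integrable g μ) (hh : Integrable h μ)
    (hhf : ∀ᵐ x ∂μ, h x ≤ f x) (hhg : ∀ᵐ x ∂μ, h x ≤ g x) :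
    ∫ x, |f x - g x| ∂μ ≤ (∫ x, f x ∂μ - ∫ x, h x ∂μ) + (∫ x, g x ∂μ - ∫ x, h x ∂μ) := by
  have hfh : Integrable (fun x => f x - h x) μ := hf.sub hh
  have hgh : Integrable (fun x => g x - h x) μ := hg.sub hh
  calc ∫ x, |f x - g x| ∂μ ≤ ∫ x, ((f x - h x) + (g x - h x)) ∂μ := by
        refine integral_mono_ae (hf.sub hg).abs (hfh.add hgh) ?_
        filter_upwards [hhf, hhg] with x hxf hxg
        rw [abs_sub_le_iff]
        constructor <;> linarith
    _ = (∫ x, f x ∂μ - ∫ x, h x ∂μ) + (∫ x, g x ∂μ - ∫ x, h x ∂μ) := by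
        rw [integral_add hfh hgh, integral_sub hf hh, integral_sub hg hh]

lemma setIntegral_abs_sub_kRN_le {N : ℕ} {Ω : Set (EuclideanSpace ℝ (Fin N))}
    (hΩ : MeasurableSet Ω) {k0 kθ : EuclideanSpace ℝ (Fin N) → ℝ}
    {y : EuclideanSpace ℝ (Fin N)} {t c : ℝ} (ht : 0 < t)
    (hint0 : IntegrableOn k0 Ω) (hintθ : IntegrableOn kθ Ω)
    (hcomp : ∀ x ∈ Ω, k0 x ≤ kθ x) (hk0RN : ∀ x ∈ Ω, k0 x ≤ kRN N x y t)
    (hθ1 : ∫ x in Ω, kθ x ≤ 1) (hc : c ≤ ∫ x in Ω, k0 x) :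
    ∫ x in Ω, |kθ x - kRN N x y t| ≤ 2 * (1 - c) := by
  have h := integral_abs_sub_le_of_le_of_le hintθ (integrable_kRN y ht).integrableOn hint0
    (ae_restrict_of_forall_mem hΩ hcomp) (ae_restrict_of_forall_mem hΩ hk0RN)
  linarith [setIntegral_kRN_le_one Ω y ht]

lemma limsup_eq_zero_of_tendsto {β : Type*} {l : Filter β} {u : β → ℝ}
    (h : Tendsto u l (𝓝 0)) : limsup u l = 0 := by
  rcases l.eq_or_neBot with rfl | hl
  -- along `⊥` the limsup is `sInf univ`, which is `0` in `ℝ`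
  · simp [limsup, limsSup]
  · exact h.limsup_eq

theorem stmt9_general (N : ℕ) (K : Set (EuclideanSpace ℝ (Fin N))) (hK : IsCompact K)
    (Ω : Set (EuclideanSpace ℝ (Fin N))) (hΩ : Ω = Kᶜ)
    (k0 kθ : EuclideanSpace ℝ (Fin N) → EuclideanSpace ℝ (Fin N) → ℝ → ℝ)
    (hcomp : ∀ x ∈ Ω, ∀ y ∈ Ω, ∀ t : ℝ, 0 < t → k0 x y t ≤ kθ x y t)
    (hk0RN : ∀ x ∈ Ω, ∀ y ∈ Ω, ∀ t : ℝ, 0 < t → k0 x y t ≤ kRN N x y t)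
    (hθ1 : ∀ y ∈ Ω, ∀ t : ℝ, 0 < t → (∫ x in Ω, kθ x y t) ≤ 1)
    (Φ : EuclideanSpace ℝ (Fin N) → ℝ)
    (hΦle : ∀ y ∈ Ω, ∀ t : ℝ, 0 < t → Φ y ≤ ∫ x in Ω, k0 x y t)
    (hint0 : ∀ y ∈ Ω, ∀ t : ℝ, 0 < t → IntegrableOn (fun x => k0 x y t) Ω)
    (hintθ : ∀ y ∈ Ω, ∀ t : ℝ, 0 < t → IntegrableOn (fun x => kθ x y t) Ω)
    -- Φ⁰(y) → 1 as |y| → ∞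
    (hΦ1 : Tendsto Φ (Filter.comap (fun y : EuclideanSpace ℝ (Fin N) => ‖y‖) atTop)
      (nhds 1)) :
    (∀ y ∈ Ω,
      Filter.limsup (fun t => ∫ x in Ω, |kθ x y t - kRN N x y t|) atTop ≤
        2 * (1 - Φ y)) ∧
    Filter.limsup
        (fun y => Filter.limsup (fun t => ∫ x in Ω, |kθ x y t - kRN N x y t|) atTop)
        (Filter.comap (fun y : EuclideanSpace ℝ (Fin N) => ‖y‖) atTop) = 0 := by
  have hΩm : MeasurableSet Ω := hΩ ▸ hK.isClosed.measurableSet.compl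
  set D := fun y t => ∫ x in Ω, |kθ x y t - kRN N x y t|
  have hD_nonneg : ∀ y t, 0 ≤ D y t := fun y t => integral_nonneg fun x => abs_nonneg _
  have hD_le : ∀ y ∈ Ω, ∀ᶠ t in atTop, D y t ≤ 2 * (1 - Φ y) := fun y hy =>
    (eventually_gt_atTop 0).mono fun t ht => setIntegral_abs_sub_kRN_le hΩm ht
      (hint0 y hy t ht) (hintθ y hy t ht) (fun x hx => hcomp x hx y hy t ht)
      (fun x hx => hk0RN x hx y hy t ht) (hθ1 y hy t ht) (hΦle y hy t ht)
  have hlimsup_le : ∀ y ∈ Ω, limsup (D y) atTop ≤ 2 * (1 - Φ y) := fun y hy =>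
    limsup_le_of_le (isCoboundedUnder_le_of_le atTop (hD_nonneg y)) (hD_le y hy)
  have hlimsup_nonneg : ∀ y ∈ Ω, 0 ≤ limsup (D y) atTop := fun y hy =>
    le_limsup_of_frequently_le (.of_forall (hD_nonneg y)) ⟨_, hD_le y hy⟩
  refine ⟨hlimsup_le, limsup_eq_zero_of_tendsto ?_⟩
  have hΩ_ev : ∀ᶠ y in comap (fun y : EuclideanSpace ℝ (Fin N) => ‖y‖) atTop, y ∈ Ω := by
    rw [comap_norm_atTop, hΩ]
    exact hK.isBounded
  have hbound : Tendsto (fun y => 2 * (1 - Φ y))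
      (comap (fun y : EuclideanSpace ℝ (Fin N) => ‖y‖) atTop) (𝓝 0) := by
    simpa using ((tendsto_const_nhds (x := (1 : ℝ))).sub hΦ1).const_mul (2 : ℝ)
  exact tendsto_of_tendsto_of_tendsto_of_le_of_le' tendsto_const_nhds hbound
    (hΩ_ev.mono hlimsup_nonneg) (hΩ_ev.mono hlimsup_le)

theorem stmt9 (N : ℕ) (K : Set (EuclideanSpace ℝ (Fin N))) (hK : IsCompact K)
    (Ω : Set (EuclideanSpace ℝ (Fin N))) (hΩ : Ω = Kᶜ)
    (k0 kθ : EuclideanSpace ℝ (Fin N) → EuclideanSpace ℝ (Fin N) → ℝ → ℝ)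
    (hpos : ∀ x ∈ Ω, ∀ y ∈ Ω, ∀ t : ℝ, 0 < t → 0 < k0 x y t)
    (hcomp : ∀ x ∈ Ω, ∀ y ∈ Ω, ∀ t : ℝ, 0 < t → k0 x y t ≤ kθ x y t)
    (hk0RN : ∀ x ∈ Ω, ∀ y ∈ Ω, ∀ t : ℝ, 0 < t → k0 x y t ≤ kRN N x y t)
    (hθ1 : ∀ y ∈ Ω, ∀ t : ℝ, 0 < t → (∫ x in Ω, kθ x y t) ≤ 1)
    (Φ : EuclideanSpace ℝ (Fin N) → ℝ)
    (hΦrange : ∀ y ∈ Ω, Φ y ∈ Icc (0 : ℝ) 1)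
    (hΦle : ∀ y ∈ Ω, ∀ t : ℝ, 0 < t → Φ y ≤ ∫ x in Ω, k0 x y t)
    (hint0 : ∀ y ∈ Ω, ∀ t : ℝ, 0 < t → IntegrableOn (fun x => k0 x y t) Ω)
    (hintθ : ∀ y ∈ Ω, ∀ t : ℝ, 0 < t → IntegrableOn (fun x => kθ x y t) Ω)
    -- Φ⁰(y) → 1 as |y| → ∞
    (hΦ1 : Tendsto Φ (Filter.comap (fun y : EuclideanSpace ℝ (Fin N) => ‖y‖) atTop)
      (nhds 1)) :
    (∀ y ∈ Ω,
      Filter.limsup (fun t => ∫ x in Ω, |kθ x y t - kRN N x y t|) atTop ≤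
        2 * (1 - Φ y)) ∧
    Filter.limsup
        (fun y => Filter.limsup (fun t => ∫ x in Ω, |kθ x y t - kRN N x y t|) atTop)
        (Filter.comap (fun y : EuclideanSpace ℝ (Fin N) => ‖y‖) atTop) = 0 :=
  stmt9_general N K hK Ω hΩ k0 kθ hcomp hk0RN hθ1 Φ hΦle hint0 hintθ hΦ1
end
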